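/- arXiv:1707.01205 — 6 statements merged into one kernel-verified Lean document; each statement's English description precedes it below -/
import Mathlib

section
/- Let A = (a_1,...,a_m)^T be an m×d real matrix. Then A is phase retrievable on R^d (i.e., for all x, y in R^d, |⟨a_j, x⟩| = |⟨a_j, y⟩| for all j implies x = y or x = -y) if and only if for every subset S of {1,...,m}, either {a_j : j ∈ S} spans R^d or {a_j : j ∈ S^c} spans R^d. -/
/-!
Writing `u = x + y` and `v = x - y`, the equation `|⟨a_j, x⟩| = |⟨a_j, y⟩|` says exactly
that `a_j ⟂ u` or `a_j ⟂ v`. So `A` fails to be phase retrievable iff there are nonzero `u`, `v`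
and a set `S` with `u` orthogonal to `{a_j : j ∈ S}` and `v` orthogonal to `{a_j : j ∉ S}`,
i.e. iff neither of these two families spans.
-/

open Matrix Module

theorem span_image_eq_top_iff_forall_dotProduct_eq_zero {ι n K : Type*} [Field K] [Fintype n]
    [DecidableEq n] (a : ι → n → K) (T : Set ι) :
    Submodule.span K (a '' T) = ⊤ ↔
      ∀ u : n → K, (∀ j ∈ T, a j ⬝ᵥ u = 0) → u = 0 := by
  have hmem (u : n → K) :
      dotProductEquiv K n u ∈ (Submodule.span K (a '' T)).dualAnnihilator ↔
        ∀ j ∈ T, a j ⬝ᵥ u = 0 := by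
    rw [← SetLike.mem_coe, Submodule.coe_dualAnnihilator_span]
    simp [Set.subset_def, dotProduct_comm]
  rw [← Submodule.dualAnnihilator_eq_bot_iff, Submodule.eq_bot_iff,
    ← (dotProductEquiv K n).toEquiv.forall_congr_right]
  simp only [LinearEquiv.coe_toEquiv, hmem, LinearEquiv.map_eq_zero_iff]

theorem abs_dotProduct_eq_abs_dotProduct_iff {n R : Type*} [CommRing R] [LinearOrder R]
    [IsStrictOrderedRing R] [Fintype n] (w x y : n → R) :
    |w ⬝ᵥ x| = |w ⬝ᵥ y| ↔ w ⬝ᵥ (x + y) = 0 ∨ w ⬝ᵥ (x - y) = 0 := by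
  rw [abs_eq_abs, dotProduct_add, dotProduct_sub, sub_eq_zero, add_eq_zero_iff_eq_neg, or_comm]

section PhaseRetrieval

variable {ι n K : Type*} [Field K] [LinearOrder K] [IsStrictOrderedRing K] [Fintype n]

def PhaseRetrievable (a : ι → n → K) : Prop :=
  ∀ x y : n → K, (∀ j, |a j ⬝ᵥ x| = |a j ⬝ᵥ y|) → y = x ∨ y = -x

theorem phaseRetrievable_iff_eq_zero_or_eq_zero (a : ι → n → K) :
    PhaseRetrievable a ↔
      ∀ u v : n → K, (∀ j, a j ⬝ᵥ u = 0 ∨ a j ⬝ᵥ v = 0) → u = 0 ∨ v = 0 := by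
  simp_rw [PhaseRetrievable, abs_dotProduct_eq_abs_dotProduct_iff]
  constructor
  · intro h u v huv
    have hsum : (2⁻¹ : K) • (u + v) + (2⁻¹ : K) • (u - v) = u := by module
    have hdiff : (2⁻¹ : K) • (u + v) - (2⁻¹ : K) • (u - v) = v := by module
    rcases h _ _ (by rwa [hsum, hdiff]) with heq | heq
    · right
      rw [← hdiff, heq, sub_self]
    · left
      rw [← hsum, heq, add_neg_cancel]
  · intro h x y hxy
    rcases h _ _ hxy with hsum | hdiff
    · exact .inr (eq_neg_of_add_eq_zero_right hsum)
    · exact .inl (sub_eq_zero.mp hdiff).symm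

theorem phaseRetrievable_iff_span_eq_top_or_span_compl_eq_top [Fintype ι] [DecidableEq n]
    (a : ι → n → K) :
    PhaseRetrievable a ↔ ∀ S : Finset ι,
      Submodule.span K (a '' {j | j ∈ S}) = ⊤ ∨
        Submodule.span K (a '' {j | j ∉ S}) = ⊤ := by
  simp_rw [phaseRetrievable_iff_eq_zero_or_eq_zero, span_image_eq_top_iff_forall_dotProduct_eq_zero]
  constructor
  · intro h S
    by_contra! hS
    obtain ⟨⟨u, hu, hu0⟩, ⟨v, hv, hv0⟩⟩ := hS
    have huv (j : ι) : a j ⬝ᵥ u = 0 ∨ a j ⬝ᵥ v = 0 := by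
      by_cases hj : j ∈ S
      exacts [.inl (hu j hj), .inr (hv j hj)]
    rcases h u v huv with rfl | rfl
    exacts [hu0 rfl, hv0 rfl]
  · intro h u v huv
    classical
    rcases h {j | a j ⬝ᵥ u = 0} with hS | hS
    · exact .inl (hS u fun j hj => by simpa using hj)
    · exact .inr (hS v fun j hj => (huv j).resolve_left (by simpa using hj))

end PhaseRetrieval

theorem stmt_0 {m d : ℕ} (a : Fin m → Fin d → ℝ) :
    (∀ x y : Fin d → ℝ,
        (∀ j, |dotProduct (a j) x| = |dotProduct (a j) y|) →
        y = x ∨ y = -x)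
    ↔ ∀ S : Finset (Fin m),
        Submodule.span ℝ (a '' {j | j ∈ S}) = ⊤ ∨
        Submodule.span ℝ (a '' {j | j ∉ S}) = ⊤ :=
  phaseRetrievable_iff_span_eq_top_or_span_compl_eq_top a
end

section
/- Let x_1, ..., x_{2d-1} be pairwise distinct real numbers and A the (2d-1)×d Vandermonde matrix with rows a_j = (1, x_j, x_j^2, ..., x_j^{d-1}). Then A is phase retrievable on R^d: for all x, y ∈ R^d, if |⟨a_j, x⟩| = |⟨a_j, y⟩| for all j, then y = x or y = -x. -/
/-!
Identify `u ∈ ℝ^d` with the polynomial `p_u` of degree `< d` having coefficient vector `u`, so that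
`⟨a_j, u⟩ = p_u(x_j)`. The hypothesis says that `p_u²` and `p_v²`, both of degree `≤ 2d - 2`, agree
at the `2d - 1` distinct nodes `x_j`, hence `p_u² = p_v²`; as `ℝ[X]` is a domain, `p_v = ± p_u`.
-/

open Polynomial

namespace Polynomial

theorem eval_ofFn {R : Type*} [CommSemiring R] [DecidableEq R] {n : ℕ} (v : Fin n → R) (t : R) :
    (ofFn n v).eval t = (fun i : Fin n => t ^ (i : ℕ)) ⬝ᵥ v := by
  simp only [ofFn_eq_sum_monomial, eval_finsetSum, eval_monomial, dotProduct, mul_comm]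

theorem eq_or_eq_neg_of_eval_sq_eq {R : Type*} [CommRing R] [IsDomain R] (p q : R[X])
    {ι : Type*} [Fintype ι] {f : ι → R} (hf : Function.Injective f)
    (heval : ∀ i, p.eval (f i) ^ 2 = q.eval (f i) ^ 2)
    (hcard : 2 * max p.natDegree q.natDegree < Fintype.card ι) : p = q ∨ p = -q := by
  have hsq : p ^ 2 = q ^ 2 := by
    refine eq_of_natDegree_lt_card_of_eval_eq _ _ hf (by simpa only [eval_pow] using heval) ?_
    rw [natDegree_pow, natDegree_pow]
    omega
  exact sq_eq_sq_iff_eq_or_eq_neg.mp hsq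

end Polynomial

theorem stmt_3 {d : ℕ} (x : Fin (2 * d - 1) → ℝ) (hx : Function.Injective x)
    (a : Fin (2 * d - 1) → Fin d → ℝ)
    (ha : ∀ j i, a j i = x j ^ (i : ℕ)) :
    ∀ u v : Fin d → ℝ,
      (∀ j, |dotProduct (a j) u| = |dotProduct (a j) v|) →
      v = u ∨ v = -u := by
  intro u v h
  rcases Nat.eq_zero_or_pos d with rfl | hd
  · exact Or.inl (Subsingleton.elim _ _)
  have hrow : ∀ j, a j = fun i : Fin d => x j ^ (i : ℕ) := fun j => funext (ha j)
  have hdeg : ∀ w : Fin d → ℝ, (ofFn d w).natDegree < d := ofFn_natDegree_lt hd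
  have hpoly : ofFn d v = ofFn d u ∨ ofFn d v = -ofFn d u := by
    refine eq_or_eq_neg_of_eval_sq_eq _ _ hx (fun j => ?_) ?_
    · simp only [eval_ofFn, ← hrow, sq_eq_sq_iff_abs_eq_abs, h]
    · have := hdeg u; have := hdeg v
      rw [Fintype.card_fin]
      omega
  rw [← map_neg] at hpoly
  exact hpoly.imp (injective_ofFn d ·) (injective_ofFn d ·)
end

section
/- The minimal number m such that there exists a phase retrievable matrix A ∈ R^{m×d} equals 2d - 1. -/
/-!
A matrix with fewer than `2d - 1` rows can be split into two blocks of fewer than `d` rows each;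
taking nonzero `u`, `v` orthogonal to the first and second block respectively, the vectors `u + v`
and `u - v` have the same measurements without being equal up to sign. Conversely, with rows
`(1, t, …, t^(d-1))` for `2d - 1` distinct values `t`, a measurement of `x` is the value at `t` of
the polynomial `p_x` with coefficient vector `x`; equal moduli of measurements make
`(p_x - p_y) (p_x + p_y)`, of degree at most `2d - 2`, vanish at `2d - 1` points, so `p_y = ±p_x`.
-/

open Polynomial

variable {K ι n : Type*} [Field K]

theorem exists_ne_zero_forall_dotProduct_eq_zero [Fintype ι] [Fintype n] (a : ι → n → K)
    (h : Fintype.card ι < Fintype.card n) : ∃ u ≠ 0, ∀ j, a j ⬝ᵥ u = 0 := by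
  have hker : LinearMap.ker (Matrix.of a).mulVecLin ≠ ⊥ :=
    LinearMap.ker_ne_bot_of_finrank_lt (by simpa using h)
  obtain ⟨u, hu, hu0⟩ := (Submodule.ne_bot_iff _).mp hker
  exact ⟨u, hu0, fun j => congrFun hu j⟩

theorem Polynomial.eval_ofFn_s4 [DecidableEq K] {d : ℕ} (x : Fin d → K) (t : K) :
    (ofFn d x).eval t = (fun i : Fin d => t ^ (i : ℕ)) ⬝ᵥ x := by
  simp [ofFn_eq_sum_monomial, eval_finsetSum, dotProduct, mul_comm]

variable [LinearOrder K] [IsStrictOrderedRing K]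

def IsPhaseRetrievable [Fintype n] (a : ι → n → K) : Prop :=
  ∀ x y : n → K, (∀ j, |a j ⬝ᵥ x| = |a j ⬝ᵥ y|) → y = x ∨ y = -x

namespace IsPhaseRetrievable

variable [Fintype n] {a : ι → n → K}

theorem eq_zero_or_eq_zero (ha : IsPhaseRetrievable a) {s : Set ι} {u v : n → K}
    (hu : ∀ j ∈ s, a j ⬝ᵥ u = 0) (hv : ∀ j ∉ s, a j ⬝ᵥ v = 0) : u = 0 ∨ v = 0 := by
  have habs : ∀ j, |a j ⬝ᵥ (u + v)| = |a j ⬝ᵥ (u - v)| := by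
    intro j
    rw [dotProduct_add, dotProduct_sub]
    by_cases hj : j ∈ s
    · rw [hu j hj, zero_add, zero_sub, abs_neg]
    · rw [hv j hj, add_zero, sub_zero]
  rcases ha _ _ habs with h | h
  · rw [sub_eq_add_neg, add_right_inj, neg_eq_self] at h
    exact .inr h
  · rw [neg_add, sub_eq_add_neg, add_left_inj, eq_comm, neg_eq_self] at h
    exact .inl h

theorem two_mul_card_sub_one_le [Fintype ι] (ha : IsPhaseRetrievable a) :
    2 * Fintype.card n - 1 ≤ Fintype.card ι := by
  classical
  by_contra! h
  obtain ⟨s, -, hs⟩ := Finset.exists_subset_card_eq (s := (Finset.univ : Finset ι))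
    (n := min (Fintype.card ι) (Fintype.card n - 1)) (by rw [Finset.card_univ]; omega)
  obtain ⟨u, hu0, hu⟩ := exists_ne_zero_forall_dotProduct_eq_zero
    (fun j : {j // j ∈ s} => a j) (by rw [Fintype.card_coe]; omega)
  obtain ⟨v, hv0, hv⟩ := exists_ne_zero_forall_dotProduct_eq_zero
    (fun j : {j // j ∉ s} => a j) (by rw [Fintype.card_subtype_compl, Fintype.card_coe]; omega)
  rcases ha.eq_zero_or_eq_zero (s := s)
    (fun j hj => hu ⟨j, hj⟩) (fun j hj => hv ⟨j, hj⟩) with h0 | h0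
  · exact hu0 h0
  · exact hv0 h0

end IsPhaseRetrievable

theorem Polynomial.eq_or_eq_neg_of_abs_eval_eq [Fintype ι]
    {d : ℕ} {p q : K[X]} (hp : p.natDegree < d) (hq : q.natDegree < d) {t : ι → K}
    (ht : Function.Injective t) (hcard : 2 * d - 1 ≤ Fintype.card ι)
    (heval : ∀ j, |p.eval (t j)| = |q.eval (t j)|) : q = p ∨ q = -p := by
  have hprod : (p - q) * (p + q) = 0 := by
    refine eq_zero_of_natDegree_lt_card_of_eval_eq_zero _ ht (fun j => ?_) ?_
    · have hsq := (sq_eq_sq_iff_abs_eq_abs _ _).mpr (heval j)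
      simp only [eval_mul, eval_sub, eval_add]
      linear_combination hsq
    · calc ((p - q) * (p + q)).natDegree ≤ (p - q).natDegree + (p + q).natDegree :=
            natDegree_mul_le
        _ ≤ (d - 1) + (d - 1) := by
            gcongr
            · exact (natDegree_sub_le _ _).trans (by omega)
            · exact (natDegree_add_le _ _).trans (by omega)
        _ < Fintype.card ι := by omega
  rcases mul_eq_zero.mp hprod with h | h
  · exact .inl (sub_eq_zero.mp h).symm
  · exact .inr (eq_neg_of_add_eq_zero_right h)

theorem isPhaseRetrievable_pow [Fintype ι] {d : ℕ} {t : ι → K} (ht : Function.Injective t)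
    (hcard : 2 * d - 1 ≤ Fintype.card ι) :
    IsPhaseRetrievable (fun j (i : Fin d) => t j ^ (i : ℕ)) := by
  classical
  intro x y h
  rcases Nat.eq_zero_or_pos d with rfl | hd
  · exact .inl (Subsingleton.elim _ _)
  · have := eq_or_eq_neg_of_abs_eval_eq (ofFn_natDegree_lt hd x) (ofFn_natDegree_lt hd y) ht
      hcard (by simpa only [eval_ofFn_s4] using h)
    rw [← map_neg] at this
    exact this.imp (injective_ofFn d ·) (injective_ofFn d ·)

theorem stmt_4_general {d : ℕ} :
    IsLeast {m : ℕ | ∃ a : Fin m → Fin d → ℝ,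
        ∀ x y : Fin d → ℝ,
          (∀ j, |dotProduct (a j) x| = |dotProduct (a j) y|) →
          y = x ∨ y = -x}
      (2 * d - 1) := by
  refine ⟨⟨_, isPhaseRetrievable_pow (t := fun j : Fin (2 * d - 1) => ((j : ℕ) : ℝ))
    (Nat.cast_injective.comp Fin.val_injective) (by simp)⟩, ?_⟩
  rintro m ⟨a, ha : IsPhaseRetrievable a⟩
  simpa using ha.two_mul_card_sub_one_le

theorem stmt_4 {d : ℕ} (hd : 1 ≤ d) :
    IsLeast {m : ℕ | ∃ a : Fin m → Fin d → ℝ,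
        ∀ x y : Fin d → ℝ,
          (∀ j, |dotProduct (a j) x| = |dotProduct (a j) y|) →
          y = x ∨ y = -x}
      (2 * d - 1) :=
  stmt_4_general
end

section
/- Suppose A ∈ R^{m×d} is s-sparse phase retrievable on R^d. Then m ≥ min{2s, 2d - 1}. -/
/-!
Split the `m` rows into two blocks `J` and `Jᶜ` and pick `u ⊥ J`, `v ⊥ Jᶜ`, both nonzero. For
every row one of `⟨a_j, u⟩`, `⟨a_j, v⟩` vanishes, so `u + v` and `u - v` have the same
measurements although neither is `±` the other; it only remains to make both `s`-sparse.
If `d ≤ s` sparsity is automatic and blocks of `d - 1` rows leave room for `u` and `v` as soon as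
`m ≤ 2d - 2`. If `s < d` and `m ≤ 2s - 1`, take `u` and `v` supported on `s + 1` fixed coordinates,
with `s - 1` and `s` rows in the blocks: then `u` ranges over a space of dimension `≥ 2`, which
leaves enough freedom to make `u + v` and `u - v` each vanish at one of these coordinates.
-/

open Module Finset

section LinearAlgebra

variable {K ι κ : Type*} [Field K] [Fintype ι]

lemma Submodule.exists_ne_zero_mem_apply_eq_zero {U : Submodule K (ι → K)}
    (hU : 1 < finrank K U) (i : ι) : ∃ u ∈ U, u ≠ 0 ∧ u i = 0 := by
  have hker : LinearMap.ker ((LinearMap.proj i).comp U.subtype) ≠ ⊥ :=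
    LinearMap.ker_ne_bot_of_finrank_lt (by rwa [finrank_self])
  obtain ⟨u, hu, hu0⟩ := Submodule.exists_mem_ne_zero_of_ne_bot hker
  exact ⟨u, u.2, by simpa using hu0, hu⟩

lemma Submodule.exists_mem_add_apply_eq_zero_and_sub_apply_eq_zero {U V : Submodule K (ι → K)}
    (hU : 2 ≤ finrank K U) (hV : V ≠ ⊥) :
    ∃ u ∈ U, ∃ v ∈ V, u ≠ 0 ∧ v ≠ 0 ∧ (∃ i, (u + v) i = 0) ∧ ∃ i, (u - v) i = 0 := by
  obtain ⟨v, hvV, hv0⟩ := Submodule.exists_mem_ne_zero_of_ne_bot hV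
  by_cases hvi : ∃ i, v i = 0
  · obtain ⟨i, hvi⟩ := hvi
    obtain ⟨u, huU, hu0, hui⟩ := U.exists_ne_zero_mem_apply_eq_zero hU i
    exact ⟨u, huU, v, hvV, hu0, hv0, ⟨i, by simp [hui, hvi]⟩, i, by simp [hui, hvi]⟩
  push Not at hvi
  obtain ⟨u₀, hu₀U, hu₀⟩ := Submodule.exists_mem_ne_zero_of_ne_bot
    (Submodule.one_le_finrank_iff.mp (one_le_two.trans hU))
  obtain ⟨i, hu₀i⟩ : ∃ i, u₀ i ≠ 0 := Function.ne_iff.mp hu₀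
  obtain ⟨w, hwU, hw0, hwi⟩ := U.exists_ne_zero_mem_apply_eq_zero hU i
  obtain ⟨k, hwk⟩ : ∃ k, w k ≠ 0 := Function.ne_iff.mp hw0
  -- `u₀` fixes the `i`-th coordinate of `u` to `v i`, and `w`, which vanishes at `i`,
  -- then fixes the `k`-th coordinate to `-v k`.
  set r := v i / u₀ i
  set c := -(r * u₀ k + v k) / w k
  have hui : (r • u₀ + c • w) i = v i := by
    simp [r, hwi, div_mul_cancel₀ _ hu₀i]
  refine ⟨r • u₀ + c • w, U.add_mem (U.smul_mem r hu₀U) (U.smul_mem c hwU), v, hvV, ?_, hv0,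
    ⟨k, ?_⟩, i, by simp [hui]⟩
  · exact fun h => hvi i (by rw [← hui, h, Pi.zero_apply])
  · simp [c, div_mul_cancel₀ _ hwk]

def rowsKer (b : κ → ι → K) (J : Finset κ) : Submodule K (ι → K) :=
  LinearMap.ker (Matrix.of fun j : J => b j).mulVecLin

lemma mem_rowsKer {b : κ → ι → K} {J : Finset κ} {x : ι → K} :
    x ∈ rowsKer b J ↔ ∀ j ∈ J, b j ⬝ᵥ x = 0 := by
  simp [rowsKer, funext_iff, Matrix.mulVec]

lemma card_le_finrank_rowsKer_add_card (b : κ → ι → K) (J : Finset κ) :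
    Fintype.card ι ≤ finrank K (rowsKer b J) + #J := by
  let M : Matrix J ι K := Matrix.of fun j => b j
  have hnullity : M.rank + finrank K (rowsKer b J) = Fintype.card ι := by
    rw [Matrix.rank, rowsKer, LinearMap.finrank_range_add_finrank_ker,
      finrank_fintype_fun_eq_card]
  have hrank : M.rank ≤ #J := by simpa using M.rank_le_card_height
  omega

lemma dotProduct_eq_zero_or_of_mem_rowsKer_compl [Fintype κ] [DecidableEq κ] {b : κ → ι → K}
    {J : Finset κ} {u v : ι → K} (hu : u ∈ rowsKer b J) (hv : v ∈ rowsKer b Jᶜ) (j : κ) :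
    b j ⬝ᵥ u = 0 ∨ b j ⬝ᵥ v = 0 := by
  by_cases hj : j ∈ J
  · exact .inl (mem_rowsKer.mp hu j hj)
  · exact .inr (mem_rowsKer.mp hv j (mem_compl.mpr hj))

end LinearAlgebra

lemma exists_finset_card_le_and_card_compl_le {κ : Type*} [Fintype κ] [DecidableEq κ] {k l : ℕ}
    (h : Fintype.card κ ≤ k + l) : ∃ J : Finset κ, #J ≤ k ∧ #Jᶜ ≤ l := by
  obtain ⟨J, -, hJ⟩ := exists_subset_card_eq (s := (univ : Finset κ)) (n := min k (Fintype.card κ))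
    (by simp)
  exact ⟨J, by omega, by rw [card_compl]; omega⟩

lemma ncard_support_extend_lt {ι κ M : Type*} [Fintype ι] [Zero M] (e : ι ↪ κ) {x : ι → M} {i : ι}
    (hi : x i = 0) : Set.ncard {k | Function.extend e x 0 k ≠ 0} < Fintype.card ι := by
  have hsub : {k | Function.extend e x 0 k ≠ 0} ⊆ e '' {i | x i ≠ 0} := by
    intro k hk
    by_cases hke : ∃ i, e i = k
    · obtain ⟨i, rfl⟩ := hke
      exact ⟨i, by simpa [e.injective.extend_apply] using hk, rfl⟩
    · exact absurd (Function.extend_apply' _ _ _ hke) hk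
  calc Set.ncard {k | Function.extend e x 0 k ≠ 0}
      ≤ Set.ncard (e '' {i | x i ≠ 0}) := Set.ncard_le_ncard hsub
    _ ≤ Set.ncard {i | x i ≠ 0} := Set.ncard_image_le
    _ < Set.ncard (Set.univ : Set ι) := Set.ncard_lt_ncard <| Set.ssubset_univ_iff.mpr <|
        (Set.ne_univ_iff_exists_notMem _).mpr ⟨i, by simpa using hi⟩
    _ = Fintype.card ι := by simp

lemma dotProduct_extend_zero {ι κ R : Type*} [Fintype ι] [Fintype κ] [NonUnitalNonAssocSemiring R]
    (e : ι ↪ κ) (a : κ → R) (x : ι → R) : a ⬝ᵥ Function.extend e x 0 = (a ∘ e) ⬝ᵥ x := by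
  symm
  refine Fintype.sum_of_injective e e.injective _ _ (fun k hk => ?_) (fun i => ?_)
  · simp [Function.extend_apply' _ _ _ hk]
  · simp [e.injective.extend_apply]

section PhaseRetrieval

variable {ι κ : Type*} [Fintype ι]

def IsSparsePhaseRetrievable (s : ℕ) (a : κ → ι → ℝ) : Prop :=
  ∀ x₀ : ι → ℝ, Set.ncard {i | x₀ i ≠ 0} ≤ s →
    {x : ι → ℝ | Set.ncard {i | x i ≠ 0} ≤ s ∧ ∀ j, |a j ⬝ᵥ x| = |a j ⬝ᵥ x₀|} = {x₀, -x₀}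

variable {s : ℕ} {a : κ → ι → ℝ}

theorem IsSparsePhaseRetrievable.eq_zero_or_eq_zero (hA : IsSparsePhaseRetrievable s a)
    {u v : ι → ℝ} (hadd : Set.ncard {i | (u + v) i ≠ 0} ≤ s)
    (hsub : Set.ncard {i | (u - v) i ≠ 0} ≤ s) (hdot : ∀ j, a j ⬝ᵥ u = 0 ∨ a j ⬝ᵥ v = 0) :
    u = 0 ∨ v = 0 := by
  have hmem : u + v ∈ {x : ι → ℝ | Set.ncard {i | x i ≠ 0} ≤ s ∧
      ∀ j, |a j ⬝ᵥ x| = |a j ⬝ᵥ (u - v)|} := by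
    refine ⟨hadd, fun j => ?_⟩
    rcases hdot j with h | h <;> simp [dotProduct_add, dotProduct_sub, h]
  rw [hA (u - v) hsub] at hmem
  rcases hmem with h | h
  · right
    rwa [sub_eq_add_neg, add_right_inj, self_eq_neg] at h
  · left
    rwa [Set.mem_singleton_iff, neg_sub, sub_eq_add_neg, add_comm, add_right_inj,
      self_eq_neg] at h

theorem IsSparsePhaseRetrievable.two_mul_card_sub_one_le [Fintype κ] [DecidableEq κ]
    (hA : IsSparsePhaseRetrievable s a) (hs : Fintype.card ι ≤ s) :
    2 * Fintype.card ι - 1 ≤ Fintype.card κ := by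
  by_contra! hκ
  obtain ⟨J, hJ, hJc⟩ := exists_finset_card_le_and_card_compl_le (κ := κ)
    (k := Fintype.card ι - 1) (l := Fintype.card ι - 1) (by omega)
  have hU := card_le_finrank_rowsKer_add_card a J
  have hV := card_le_finrank_rowsKer_add_card a Jᶜ
  obtain ⟨u, huU, hu0⟩ := Submodule.exists_mem_ne_zero_of_ne_bot
    (Submodule.one_le_finrank_iff.mp (by omega : 1 ≤ finrank ℝ (rowsKer a J)))
  obtain ⟨v, hvV, hv0⟩ := Submodule.exists_mem_ne_zero_of_ne_bot
    (Submodule.one_le_finrank_iff.mp (by omega : 1 ≤ finrank ℝ (rowsKer a Jᶜ)))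
  have hsparse (x : ι → ℝ) : Set.ncard {i | x i ≠ 0} ≤ s :=
    (Set.ncard_le_card _).trans (by simpa using hs)
  exact (hA.eq_zero_or_eq_zero (hsparse _) (hsparse _)
    (dotProduct_eq_zero_or_of_mem_rowsKer_compl huU hvV)).elim hu0 hv0

theorem IsSparsePhaseRetrievable.eq_zero_or_eq_zero_of_embedding {ι' : Type*} [Fintype ι']
    (hA : IsSparsePhaseRetrievable s a) (e : ι' ↪ ι) (he : Fintype.card ι' ≤ s + 1)
    {u v : ι' → ℝ} (hadd : ∃ i, (u + v) i = 0) (hsub : ∃ i, (u - v) i = 0)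
    (hdot : ∀ j, (a j ∘ e) ⬝ᵥ u = 0 ∨ (a j ∘ e) ⬝ᵥ v = 0) : u = 0 ∨ v = 0 := by
  set E := Function.ExtendByZero.linearMap ℝ e
  have hsparse {x : ι' → ℝ} (hx : ∃ i, x i = 0) : Set.ncard {k | E x k ≠ 0} ≤ s := by
    obtain ⟨i, hi⟩ := hx
    have := ncard_support_extend_lt e hi
    simp only [E, Function.ExtendByZero.linearMap_apply]
    omega
  have hE : ∀ x, E x = 0 → x = 0 :=
    (injective_iff_map_eq_zero E).mp (Function.extend_injective e.injective (0 : ι → ℝ))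
  refine (hA.eq_zero_or_eq_zero (u := E u) (v := E v) (by simpa using hsparse hadd)
    (by simpa using hsparse hsub) fun j => ?_).imp (hE u) (hE v)
  have hdotE (x : ι' → ℝ) : a j ⬝ᵥ E x = (a j ∘ e) ⬝ᵥ x := dotProduct_extend_zero e (a j) x
  rw [hdotE, hdotE]
  exact hdot j

theorem IsSparsePhaseRetrievable.two_mul_le_card [Fintype κ] [DecidableEq κ]
    (hA : IsSparsePhaseRetrievable s a) (hs : s < Fintype.card ι) :
    2 * s ≤ Fintype.card κ := by
  by_contra! hκ
  obtain ⟨J, hJ, hJc⟩ :=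
    exists_finset_card_le_and_card_compl_le (κ := κ) (k := s - 1) (l := s) (by omega)
  obtain ⟨e⟩ : Nonempty (Fin (s + 1) ↪ ι) := Function.Embedding.nonempty_of_card_le (by simpa)
  have hU := card_le_finrank_rowsKer_add_card (fun j => a j ∘ e) J
  have hV := card_le_finrank_rowsKer_add_card (fun j => a j ∘ e) Jᶜ
  rw [Fintype.card_fin] at hU hV
  obtain ⟨u, huU, v, hvV, hu0, hv0, hadd, hsub⟩ :=
    Submodule.exists_mem_add_apply_eq_zero_and_sub_apply_eq_zero
      (U := rowsKer (fun j => a j ∘ e) J) (V := rowsKer (fun j => a j ∘ e) Jᶜ) (by omega)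
      (Submodule.one_le_finrank_iff.mp (by omega))
  exact (hA.eq_zero_or_eq_zero_of_embedding e (by simp) hadd hsub
    (dotProduct_eq_zero_or_of_mem_rowsKer_compl huU hvV)).elim hu0 hv0

end PhaseRetrieval

theorem stmt_10_general {m d s : ℕ} (a : Fin m → Fin d → ℝ)
    (hPR : ∀ x₀ : Fin d → ℝ, Set.ncard {i | x₀ i ≠ 0} ≤ s →
      {x : Fin d → ℝ | Set.ncard {i | x i ≠ 0} ≤ s ∧
          ∀ j, |dotProduct (a j) x| = |dotProduct (a j) x₀|}
        = {x₀, -x₀}) :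
    m ≥ min (2 * s) (2 * d - 1) := by
  have hA : IsSparsePhaseRetrievable s a := hPR
  rcases le_or_gt d s with hds | hsd
  · have := hA.two_mul_card_sub_one_le (by simpa using hds)
    simp only [Fintype.card_fin] at this
    omega
  · have := hA.two_mul_le_card (by simpa using hsd)
    simp only [Fintype.card_fin] at this
    omega

theorem stmt_10 {m d s : ℕ} (hs : s ≤ d) (a : Fin m → Fin d → ℝ)
    (hPR : ∀ x₀ : Fin d → ℝ, Set.ncard {i | x₀ i ≠ 0} ≤ s →
      {x : Fin d → ℝ | Set.ncard {i | x i ≠ 0} ≤ s ∧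
          ∀ j, |dotProduct (a j) x| = |dotProduct (a j) x₀|}
        = {x₀, -x₀}) :
    m ≥ min (2 * s) (2 * d - 1) :=
  stmt_10_general a hPR
end

section
/- Let A ∈ R^{m×d} satisfy the SRIP of order 2s with levels θ_-, θ_+ ∈ (0,2). Then A is s-sparse phase retrievable: for all x, y ∈ R^d with at most s nonzero entries each, if |⟨a_j, x⟩| = |⟨a_j, y⟩| for all j = 1,...,m, then y = x or y = -x. -/
/-!
If `|⟨a_j, x⟩| = |⟨a_j, y⟩|` for every row, then on each row either `⟨a_j, x - y⟩ = 0` or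
`⟨a_j, x + y⟩ = 0`, and one of these two alternatives holds on at least half of the rows.
Both `x - y` and `x + y` are `2s`-sparse, so the lower SRIP bound on that half of the rows
forces the corresponding vector to vanish.
-/

open Finset Function Matrix

lemma ncard_support_add_le {ι M : Type*} [Finite ι] [AddZeroClass M] (v w : ι → M) :
    (support (v + w)).ncard ≤ (support v).ncard + (support w).ncard :=
  (Set.ncard_le_ncard (support_add v w) (Set.toFinite _)).trans (Set.ncard_union_le _ _)

lemma ncard_support_sub_le {ι G : Type*} [Finite ι] [SubtractionMonoid G] (v w : ι → G) :
    (support (v - w)).ncard ≤ (support v).ncard + (support w).ncard :=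
  (Set.ncard_le_ncard (support_sub v w) (Set.toFinite _)).trans (Set.ncard_union_le _ _)

lemma exists_two_mul_card_ge_of_abs_eq {ι : Type*} [Fintype ι] {f g : ι → ℝ}
    (h : ∀ j, |f j| = |g j|) :
    ∃ S : Finset ι, Fintype.card ι ≤ 2 * #S ∧
      ((∀ j ∈ S, f j = g j) ∨ ∀ j ∈ S, f j = -g j) := by
  classical
  set S := univ.filter fun j => f j = g j
  set T := univ.filter fun j => f j = -g j
  have hcover : univ ⊆ S ∪ T := fun j _ => by
    rcases abs_eq_abs.mp (h j) with hj | hj <;> simp [S, T, hj]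
  have hcard : Fintype.card ι ≤ #S + #T :=
    (card_le_card hcover).trans (card_union_le S T)
  rcases le_or_gt (Fintype.card ι) (2 * #S) with hS | hS
  · exact ⟨S, hS, .inl fun j hj => (mem_filter.mp hj).2⟩
  · exact ⟨T, by omega, .inr fun j hj => (mem_filter.mp hj).2⟩

/-- The lower bound of the strong restricted isometry property (SRIP) of order `k`. -/
def HasLowerSRIP {ι κ : Type*} [Fintype ι] [Fintype κ] (a : ι → κ → ℝ) (θ : ℝ) (k : ℕ) :
    Prop :=
  ∀ S : Finset ι, Fintype.card ι ≤ 2 * #S → ∀ v : κ → ℝ, (support v).ncard ≤ k →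
    θ * ∑ i, v i ^ 2 ≤ ∑ j ∈ S, (a j ⬝ᵥ v) ^ 2

namespace HasLowerSRIP

variable {ι κ : Type*} [Fintype ι] [Fintype κ] {a : ι → κ → ℝ} {θ : ℝ}

lemma eq_zero_of_dotProduct_eq_zero {k : ℕ} (hA : HasLowerSRIP a θ k) (hθ : 0 < θ)
    {S : Finset ι} (hS : Fintype.card ι ≤ 2 * #S) {v : κ → ℝ} (hv : (support v).ncard ≤ k)
    (hzero : ∀ j ∈ S, a j ⬝ᵥ v = 0) : v = 0 := by
  have hbound := hA S hS v hv
  rw [sum_eq_zero (s := S) fun j hj => by rw [hzero j hj, sq, mul_zero]] at hbound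
  have hsum : ∑ i, v i ^ 2 = 0 :=
    le_antisymm (nonpos_of_mul_nonpos_right hbound hθ) (by positivity)
  funext i
  exact pow_eq_zero_iff two_ne_zero |>.mp <|
    congrFun ((Fintype.sum_eq_zero_iff_of_nonneg fun i => sq_nonneg (v i)).mp hsum) i

theorem eq_or_eq_neg_of_abs_dotProduct_eq {s : ℕ} (hA : HasLowerSRIP a θ (2 * s))
    (hθ : 0 < θ) {x y : κ → ℝ} (hx : (support x).ncard ≤ s) (hy : (support y).ncard ≤ s)
    (habs : ∀ j, |a j ⬝ᵥ x| = |a j ⬝ᵥ y|) : y = x ∨ y = -x := by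
  obtain ⟨S, hS, hxy | hxy⟩ := exists_two_mul_card_ge_of_abs_eq habs
  · refine .inl (sub_eq_zero.mp ?_).symm
    refine hA.eq_zero_of_dotProduct_eq_zero hθ hS ?_ fun j hj => ?_
    · linarith [ncard_support_sub_le x y]
    · rw [dotProduct_sub, hxy j hj, sub_self]
  · refine .inr (eq_neg_of_add_eq_zero_right ?_)
    refine hA.eq_zero_of_dotProduct_eq_zero hθ hS ?_ fun j hj => ?_
    · linarith [ncard_support_add_le x y]
    · rw [dotProduct_add, hxy j hj, neg_add_cancel]

end HasLowerSRIP

theorem stmt_13_general {m d s : ℕ} (a : Fin m → Fin d → ℝ)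
    (θm θp : ℝ) (hθm : 0 < θm)
    (hSRIP : ∀ S : Finset (Fin m), m ≤ 2 * S.card →
      ∀ v : Fin d → ℝ, Set.ncard {i | v i ≠ 0} ≤ 2 * s →
        θm * (∑ i, (v i) ^ 2) ≤ (∑ j ∈ S, (dotProduct (a j) v) ^ 2) ∧
        (∑ j ∈ S, (dotProduct (a j) v) ^ 2) ≤ θp * (∑ i, (v i) ^ 2)) :
    ∀ x y : Fin d → ℝ,
      Set.ncard {i | x i ≠ 0} ≤ s → Set.ncard {i | y i ≠ 0} ≤ s →
      (∀ j, |dotProduct (a j) x| = |dotProduct (a j) y|) →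
      y = x ∨ y = -x := by
  intro x y hx hy habs
  have hA : HasLowerSRIP a θm (2 * s) := fun S hS v hv =>
    (hSRIP S (by simpa using hS) v hv).1
  exact hA.eq_or_eq_neg_of_abs_dotProduct_eq hθm hx hy habs

theorem stmt_13 {m d s : ℕ} (a : Fin m → Fin d → ℝ)
    (θm θp : ℝ) (hθm : 0 < θm) (hθ : θm ≤ θp) (hθp : θp < 2)
    (hSRIP : ∀ S : Finset (Fin m), m ≤ 2 * S.card →
      ∀ v : Fin d → ℝ, Set.ncard {i | v i ≠ 0} ≤ 2 * s →
        θm * (∑ i, (v i) ^ 2) ≤ (∑ j ∈ S, (dotProduct (a j) v) ^ 2) ∧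
        (∑ j ∈ S, (dotProduct (a j) v) ^ 2) ≤ θp * (∑ i, (v i) ^ 2)) :
    ∀ x y : Fin d → ℝ,
      Set.ncard {i | x i ≠ 0} ≤ s → Set.ncard {i | y i ≠ 0} ≤ s →
      (∀ j, |dotProduct (a j) x| = |dotProduct (a j) y|) →
      y = x ∨ y = -x :=
  stmt_13_general a θm θp hθm hSRIP
end

section
/- Let A = (a_1,...,a_m)^T ∈ R^{m×d} and suppose for some subset S ⊆ {1,...,m} neither {a_j : j ∈ S} nor {a_j : j ∈ S^c} spans R^d. Then A is not phase retrievable: there exist x, y ∈ R^d with y ≠ x and y ≠ -x but |⟨a_j, x⟩| = |⟨a_j, y⟩| for all j. -/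
/-! Take `u ≠ 0` orthogonal to the rows indexed by `S` and `v ≠ 0` orthogonal to the others.
Every row then pairs with `u + v` and `u - v` to the same value up to sign, while `u - v` is
neither `u + v` (as `v ≠ 0`) nor `-(u + v)` (as `u ≠ 0`). -/

open Matrix

theorem Submodule.exists_ne_zero_forall_dotProduct_eq_zero {K n : Type*} [Field K] [Fintype n]
    [DecidableEq n] {p : Submodule K (n → K)} (hp : p ≠ ⊤) :
    ∃ u ≠ 0, ∀ w ∈ p, w ⬝ᵥ u = 0 := by
  obtain ⟨f, hf0, hpf⟩ := p.exists_le_ker_of_lt_top hp.lt_top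
  refine ⟨(dotProductEquiv K n).symm f, by simpa using hf0, fun w hw => ?_⟩
  rw [dotProduct_comm, ← dotProductEquiv_apply_apply, LinearEquiv.apply_symm_apply]
  exact hpf hw

theorem abs_dotProduct_add_eq_abs_dotProduct_sub {K n : Type*} [Field K] [LinearOrder K]
    [IsStrictOrderedRing K] [Fintype n] {w u v : n → K} (h : w ⬝ᵥ u = 0 ∨ w ⬝ᵥ v = 0) :
    |w ⬝ᵥ (u + v)| = |w ⬝ᵥ (u - v)| := by
  rcases h with h | h <;> simp [dotProduct_add, dotProduct_sub, h, abs_neg]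

theorem sub_ne_add_of_ne_zero {M : Type*} [AddCommGroup M] [IsAddTorsionFree M] {v : M} (u : M)
    (hv : v ≠ 0) : u - v ≠ u + v := by
  rwa [sub_eq_add_neg, Ne, add_right_inj, neg_eq_self]

theorem sub_ne_neg_add_of_ne_zero {M : Type*} [AddCommGroup M] [IsAddTorsionFree M] {u : M}
    (v : M) (hu : u ≠ 0) : u - v ≠ -(u + v) := by
  rwa [neg_add, sub_eq_add_neg, Ne, add_left_inj, self_eq_neg]

theorem stmt_17 {m d : ℕ} (a : Fin m → Fin d → ℝ) (S : Finset (Fin m))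
    (hS : Submodule.span ℝ (a '' {j | j ∈ S}) ≠ ⊤)
    (hSc : Submodule.span ℝ (a '' {j | j ∉ S}) ≠ ⊤) :
    ∃ x y : Fin d → ℝ, y ≠ x ∧ y ≠ -x ∧
      ∀ j, |dotProduct (a j) x| = |dotProduct (a j) y| := by
  obtain ⟨u, hu0, hu⟩ := Submodule.exists_ne_zero_forall_dotProduct_eq_zero hS
  obtain ⟨v, hv0, hv⟩ := Submodule.exists_ne_zero_forall_dotProduct_eq_zero hSc
  refine ⟨u + v, u - v, sub_ne_add_of_ne_zero u hv0, sub_ne_neg_add_of_ne_zero v hu0, fun j => ?_⟩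
  apply abs_dotProduct_add_eq_abs_dotProduct_sub
  by_cases hj : j ∈ S
  · exact .inl (hu _ (Submodule.subset_span ⟨j, hj, rfl⟩))
  · exact .inr (hv _ (Submodule.subset_span ⟨j, hj, rfl⟩))
end
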